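/- arXiv:2503.01316 — 3 statements merged into one kernel-verified Lean document; each statement's English description precedes it below -/
import Mathlib

section
/- Let A be a unital associative algebra over a field k, and let r = Σ r⁽¹⁾ ⊗ r⁽²⁾ and s = Σ s⁽¹⁾ ⊗ s⁽²⁾ be elements of A ⊗ A forming an associative Yang-Baxter pair, i.e. r¹³r¹² − r¹²r²³ + s²³r¹³ = 0 and s¹³r¹² − s¹²s²³ + s²³s¹³ = 0 in A ⊗ A ⊗ A. Define R(a) = Σ r⁽¹⁾ a r⁽²⁾ and S(a) = Σ s⁽¹⁾ a s⁽²⁾. Then (A, R, S) is a Rota-Baxter system: for all a, b ∈ A one has R(a)R(b) = R(R(a)b + aS(b)) and S(a)S(b) = S(R(a)b + aS(b)). -/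
open scoped TensorProduct

/-- `Fbil x y` is the operator `a ↦ x * a * y`. -/
noncomputable def Fbil (k A : Type*) [CommSemiring k] [Ring A] [Algebra k A] :
    A →ₗ[k] A →ₗ[k] (A →ₗ[k] A) :=
  LinearMap.mk₂ k (fun x y => (LinearMap.mulLeft k x).comp (LinearMap.mulRight k y))
    (fun x x' y => by ext a; simp [add_mul])
    (fun c x y => by ext a; simp [smul_mul_assoc])
    (fun x y y' => by ext a; simp [mul_add])
    (fun c x y => by ext a; simp [mul_smul_comm])

/-- `F2 (Σ x ⊗ y)` is the operator `a ↦ Σ x * a * y`. -/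
noncomputable def F2 (k A : Type*) [CommSemiring k] [Ring A] [Algebra k A] :
    A ⊗[k] A →ₗ[k] (A →ₗ[k] A) :=
  TensorProduct.lift (Fbil k A)

/-- `r ↦ r¹² = r ⊗ 1`. -/
noncomputable def e12 (k A : Type*) [CommSemiring k] [Ring A] [Algebra k A] :
    A ⊗[k] A →ₐ[k] (A ⊗[k] A) ⊗[k] A :=
  Algebra.TensorProduct.includeLeft

/-- `a ⊗ b ↦ (a ⊗ b)¹³ = a ⊗ 1 ⊗ b`. -/
noncomputable def e13 (k A : Type*) [CommSemiring k] [Ring A] [Algebra k A] :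
    A ⊗[k] A →ₐ[k] (A ⊗[k] A) ⊗[k] A :=
  Algebra.TensorProduct.map Algebra.TensorProduct.includeLeft (AlgHom.id k A)

/-- `r ↦ r²³ = 1 ⊗ r`. -/
noncomputable def e23 (k A : Type*) [CommSemiring k] [Ring A] [Algebra k A] :
    A ⊗[k] A →ₐ[k] (A ⊗[k] A) ⊗[k] A :=
  Algebra.TensorProduct.map Algebra.TensorProduct.includeRight (AlgHom.id k A)

/-!
Every term of the associative Yang–Baxter equations in `A ⊗ A ⊗ A` becomes a bilinear
operator on `A` once `(x ⊗ y) ⊗ z` is read as `(a, b) ↦ x a y b z`: under this reading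
`u¹³v¹²`, `u¹²v²³` and `u²³v¹³` become `F2 u (F2 v a * b)`, `F2 u a * F2 v b` and
`F2 v (a * F2 u b)`, so the two equations turn into the two Rota–Baxter identities.
-/

section TripleOperator

variable (k A : Type*) [CommSemiring k] [Ring A] [Algebra k A]

noncomputable def F3 : (A ⊗[k] A) ⊗[k] A →ₗ[k] (A →ₗ[k] A →ₗ[k] A) :=
  TensorProduct.lift <| LinearMap.mk₂ k
    (fun u z => ((Fbil k A).flip z).comp (F2 k A u))
    (fun u u' z => by ext a b; simp [Fbil, F2])
    (fun c u z => by ext a b; simp [Fbil, F2])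
    (fun u z z' => by ext a b; simp [Fbil, F2])
    (fun c u z => by ext a b; simp [Fbil, F2])

variable {k A}

lemma F2_tmul (x y a : A) : F2 k A (x ⊗ₜ[k] y) a = x * a * y := by
  simp [F2, Fbil, mul_assoc]

lemma F3_tmul (x y z a b : A) :
    F3 k A ((x ⊗ₜ[k] y) ⊗ₜ[k] z) a b = x * a * y * b * z := by
  simp [F3, F2, Fbil, mul_assoc]

lemma F3_e13_mul_e12 (u v : A ⊗[k] A) (a b : A) :
    F3 k A (e13 k A u * e12 k A v) a b = F2 k A u (F2 k A v a * b) := by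
  induction u using TensorProduct.induction_on with
  | zero => simp
  | add u₁ u₂ h₁ h₂ => simp [add_mul, h₁, h₂]
  | tmul x y =>
    induction v using TensorProduct.induction_on with
    | zero => simp
    | add v₁ v₂ h₁ h₂ => simp [mul_add, add_mul, h₁, h₂]
    | tmul p q => simp [e13, e12, F3_tmul, F2_tmul, mul_assoc]

lemma F3_e12_mul_e23 (u v : A ⊗[k] A) (a b : A) :
    F3 k A (e12 k A u * e23 k A v) a b = F2 k A u a * F2 k A v b := by
  induction u using TensorProduct.induction_on with
  | zero => simp
  | add u₁ u₂ h₁ h₂ => simp [add_mul, h₁, h₂]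
  | tmul x y =>
    induction v using TensorProduct.induction_on with
    | zero => simp
    | add v₁ v₂ h₁ h₂ => simp [mul_add, h₁, h₂]
    | tmul p q => simp [e12, e23, F3_tmul, F2_tmul, mul_assoc]

lemma F3_e23_mul_e13 (u v : A ⊗[k] A) (a b : A) :
    F3 k A (e23 k A u * e13 k A v) a b = F2 k A v (a * F2 k A u b) := by
  induction u using TensorProduct.induction_on with
  | zero => simp
  | add u₁ u₂ h₁ h₂ => simp [add_mul, mul_add, h₁, h₂]
  | tmul x y =>
    induction v using TensorProduct.induction_on with
    | zero => simp
    | add v₁ v₂ h₁ h₂ => simp [mul_add, h₁, h₂]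
    | tmul p q => simp [e13, e23, F3_tmul, F2_tmul, mul_assoc]

end TripleOperator

/-- An associative Yang–Baxter pair `(r, s)` on a unital algebra `A` gives a
Rota–Baxter system `(A, F2 r, F2 s)`. -/
theorem stmt0 (k A : Type*) [Field k] [Ring A] [Algebra k A] (r s : A ⊗[k] A)
    (h1 : e13 k A r * e12 k A r - e12 k A r * e23 k A r + e23 k A s * e13 k A r = 0)
    (h2 : e13 k A s * e12 k A r - e12 k A s * e23 k A s + e23 k A s * e13 k A s = 0) :
    ∀ a b : A,
      F2 k A r a * F2 k A r b = F2 k A r (F2 k A r a * b + a * F2 k A s b) ∧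
      F2 k A s a * F2 k A s b = F2 k A s (F2 k A r a * b + a * F2 k A s b) := by
  intro a b
  have hR := congrArg (fun t => F3 k A t a b) h1
  have hS := congrArg (fun t => F3 k A t a b) h2
  simp only [map_sub, map_add, map_zero, LinearMap.sub_apply, LinearMap.add_apply,
    LinearMap.zero_apply, F3_e13_mul_e12, F3_e12_mul_e23, F3_e23_mul_e13] at hR hS
  rw [sub_add_eq_add_sub, sub_eq_zero] at hR hS
  simp only [map_add]
  exact ⟨hR.symm, hS.symm⟩
end

section
/- Let (V, {m_n}, {R_n}, {S_n}) be a homotopy Rota-Baxter system. Then the homology H(V, m₁), equipped with the multiplication induced by m₂ and the operators induced by R₁ and S₁, is a Rota-Baxter system in the classical sense. -/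
/-! On cycles, every term of the arity-3 `A∞` relation and of the arity-2 homotopy Rota-Baxter
relations in which `m₁` hits an argument vanishes, so what remains says that the associator
and the two Rota-Baxter defects are the boundaries of `-m₃`, `-R₂` and `-S₂`. -/

section CycleDefects

variable {k V : Type*} [CommRing k] [AddCommGroup V] [Module k V]
  (m₁ : V →ₗ[k] V) (m₂ : V →ₗ[k] V →ₗ[k] V)

theorem associator_eq_boundary_of_cycles (m₃ : V →ₗ[k] V →ₗ[k] V →ₗ[k] V) {x y z : V}
    (hx : m₁ x = 0) (hy : m₁ y = 0) (hz : m₁ z = 0) {ε δ : ℤ}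
    (h : m₁ (m₃ x y z) + m₃ (m₁ x) y z + ε • m₃ x (m₁ y) z + δ • m₃ x y (m₁ z)
        + m₂ (m₂ x y) z - m₂ x (m₂ y z) = 0) :
    m₂ (m₂ x y) z - m₂ x (m₂ y z) = m₁ (-m₃ x y z) := by
  simp only [hx, hy, hz, map_zero, LinearMap.zero_apply, smul_zero, add_zero] at h
  rw [map_neg, eq_neg_iff_add_eq_zero, ← h]
  abel

theorem rotaBaxter_defect_eq_boundary_of_cycles (R S T : V →ₗ[k] V) (T₂ : V →ₗ[k] V →ₗ[k] V)
    {a b : V} (ha : m₁ a = 0) (hb : m₁ b = 0) {ε : ℤ}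
    (h : m₂ (T a) (T b) - T (m₂ a (S b)) - T (m₂ (R a) b)
        = -(m₁ (T₂ a b) + ε • T₂ a (m₁ b) + T₂ (m₁ a) b)) :
    m₂ (T a) (T b) - T (m₂ (R a) b + m₂ a (S b)) = m₁ (-T₂ a b) := by
  simp only [ha, hb, map_zero, LinearMap.zero_apply, smul_zero, add_zero] at h
  rw [map_add, map_neg, ← h]
  abel

end CycleDefects

theorem stmt11_general (k V : Type*) [Field k] [AddCommGroup V] [Module k V]
    (𝒢 : ℤ → Submodule k V)
    (m₁ : V →ₗ[k] V) (m₂ : V →ₗ[k] V →ₗ[k] V) (m₃ : V →ₗ[k] V →ₗ[k] V →ₗ[k] V)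
    (R₁ S₁ : V →ₗ[k] V) (R₂ S₂ : V →ₗ[k] V →ₗ[k] V)
    (st3 : ∀ p q : ℤ, ∀ x ∈ 𝒢 p, ∀ y ∈ 𝒢 q, ∀ z : V,
      m₁ (m₃ x y z) + m₃ (m₁ x) y z
        + (((-1 : ℤˣ) ^ p : ℤˣ) : ℤ) • m₃ x (m₁ y) z
        + (((-1 : ℤˣ) ^ (p + q) : ℤˣ) : ℤ) • m₃ x y (m₁ z)
        + m₂ (m₂ x y) z - m₂ x (m₂ y z) = 0)
    (hR2 : ∀ p : ℤ, ∀ a ∈ 𝒢 p, ∀ b : V,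
      m₂ (R₁ a) (R₁ b) - R₁ (m₂ a (S₁ b)) - R₁ (m₂ (R₁ a) b)
        = -(m₁ (R₂ a b) + (((-1 : ℤˣ) ^ p : ℤˣ) : ℤ) • R₂ a (m₁ b) + R₂ (m₁ a) b))
    (hS2 : ∀ p : ℤ, ∀ a ∈ 𝒢 p, ∀ b : V,
      m₂ (S₁ a) (S₁ b) - S₁ (m₂ a (S₁ b)) - S₁ (m₂ (R₁ a) b)
        = -(m₁ (S₂ a b) + (((-1 : ℤˣ) ^ p : ℤˣ) : ℤ) • S₂ a (m₁ b) + S₂ (m₁ a) b)) :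
    (∀ p q : ℤ, ∀ x ∈ 𝒢 p, ∀ y ∈ 𝒢 q, ∀ z : V, m₁ x = 0 → m₁ y = 0 → m₁ z = 0 →
      ∃ w : V, m₂ (m₂ x y) z - m₂ x (m₂ y z) = m₁ w) ∧
    (∀ p : ℤ, ∀ a ∈ 𝒢 p, ∀ b : V, m₁ a = 0 → m₁ b = 0 →
      ∃ w : V, m₂ (R₁ a) (R₁ b) - R₁ (m₂ (R₁ a) b + m₂ a (S₁ b)) = m₁ w) ∧
    (∀ p : ℤ, ∀ a ∈ 𝒢 p, ∀ b : V, m₁ a = 0 → m₁ b = 0 →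
      ∃ w : V, m₂ (S₁ a) (S₁ b) - S₁ (m₂ (R₁ a) b + m₂ a (S₁ b)) = m₁ w) :=
  ⟨fun p q x hx y hy z hxc hyc hzc =>
      ⟨_, associator_eq_boundary_of_cycles m₁ m₂ m₃ hxc hyc hzc (st3 p q x hx y hy z)⟩,
    fun p a ha _ hac hbc =>
      ⟨_, rotaBaxter_defect_eq_boundary_of_cycles m₁ m₂ R₁ S₁ R₁ R₂ hac hbc (hR2 p a ha _)⟩,
    fun p a ha _ hac hbc =>
      ⟨_, rotaBaxter_defect_eq_boundary_of_cycles m₁ m₂ R₁ S₁ S₁ S₂ hac hbc (hS2 p a ha _)⟩⟩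

/-- Let `(V, {m_n}, {R_n}, {S_n})` be a homotopy Rota-Baxter system (here presented by its
structure maps in arities `≤ 3`, with Koszul signs on homogeneous elements of the grading `𝒢`).
Then the homology `H(V, m₁)`, with product induced by `m₂` and operators induced by `R₁, S₁`,
is a classical Rota-Baxter system: the product is associative up to boundary and the two
Rota-Baxter system identities hold up to boundary on cycles. -/
theorem stmt11 (k V : Type*) [Field k] [AddCommGroup V] [Module k V]
    (𝒢 : ℤ → Submodule k V)
    (m₁ : V →ₗ[k] V) (m₂ : V →ₗ[k] V →ₗ[k] V) (m₃ : V →ₗ[k] V →ₗ[k] V →ₗ[k] V)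
    (R₁ S₁ : V →ₗ[k] V) (R₂ S₂ : V →ₗ[k] V →ₗ[k] V)
    (st1 : ∀ x : V, m₁ (m₁ x) = 0)
    (st2 : ∀ p : ℤ, ∀ x ∈ 𝒢 p, ∀ y : V,
      m₁ (m₂ x y) = m₂ (m₁ x) y + (((-1 : ℤˣ) ^ p : ℤˣ) : ℤ) • m₂ x (m₁ y))
    (st3 : ∀ p q : ℤ, ∀ x ∈ 𝒢 p, ∀ y ∈ 𝒢 q, ∀ z : V,
      m₁ (m₃ x y z) + m₃ (m₁ x) y z
        + (((-1 : ℤˣ) ^ p : ℤˣ) : ℤ) • m₃ x (m₁ y) z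
        + (((-1 : ℤˣ) ^ (p + q) : ℤˣ) : ℤ) • m₃ x y (m₁ z)
        + m₂ (m₂ x y) z - m₂ x (m₂ y z) = 0)
    (hR1 : ∀ x : V, m₁ (R₁ x) = R₁ (m₁ x))
    (hS1 : ∀ x : V, m₁ (S₁ x) = S₁ (m₁ x))
    (hR2 : ∀ p : ℤ, ∀ a ∈ 𝒢 p, ∀ b : V,
      m₂ (R₁ a) (R₁ b) - R₁ (m₂ a (S₁ b)) - R₁ (m₂ (R₁ a) b)
        = -(m₁ (R₂ a b) + (((-1 : ℤˣ) ^ p : ℤˣ) : ℤ) • R₂ a (m₁ b) + R₂ (m₁ a) b))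
    (hS2 : ∀ p : ℤ, ∀ a ∈ 𝒢 p, ∀ b : V,
      m₂ (S₁ a) (S₁ b) - S₁ (m₂ a (S₁ b)) - S₁ (m₂ (R₁ a) b)
        = -(m₁ (S₂ a b) + (((-1 : ℤˣ) ^ p : ℤˣ) : ℤ) • S₂ a (m₁ b) + S₂ (m₁ a) b)) :
    (∀ p q : ℤ, ∀ x ∈ 𝒢 p, ∀ y ∈ 𝒢 q, ∀ z : V, m₁ x = 0 → m₁ y = 0 → m₁ z = 0 →
      ∃ w : V, m₂ (m₂ x y) z - m₂ x (m₂ y z) = m₁ w) ∧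
    (∀ p : ℤ, ∀ a ∈ 𝒢 p, ∀ b : V, m₁ a = 0 → m₁ b = 0 →
      ∃ w : V, m₂ (R₁ a) (R₁ b) - R₁ (m₂ (R₁ a) b + m₂ a (S₁ b)) = m₁ w) ∧
    (∀ p : ℤ, ∀ a ∈ 𝒢 p, ∀ b : V, m₁ a = 0 → m₁ b = 0 →
      ∃ w : V, m₂ (S₁ a) (S₁ b) - S₁ (m₂ (R₁ a) b + m₂ a (S₁ b)) = m₁ w) :=
  stmt11_general k V 𝒢 m₁ m₂ m₃ R₁ S₁ R₂ S₂ st3 hR2 hS2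
end

section
/- Let (V, d_V) be a chain complex and suppose R₁, S₁ : V → V are degree-0 chain maps and R₂, S₂ : V ⊗ V → V are degree-1 maps satisfying m₂∘(R₁⊗R₁) − R₁∘m₂∘(id⊗S₁) − R₁∘m₂∘(R₁⊗id) = −(m₁∘R₂ + R₂∘(id⊗m₁) + R₂∘(m₁⊗id)) and the analogous identity with S in place of R on the outside (where m₁ = d_V and m₂ is a chain multiplication on V). Then the induced operators [R₁], [S₁] on homology H(V, m₁) form a coupled Rota-Baxter operator: [R₁](a)[R₁](b) = [R₁]([R₁](a)b + a[S₁](b)) and [S₁](a)[S₁](b) = [S₁]([R₁](a)b + a[S₁](b)). -/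
section HomotopyRotaBaxter

variable {k V : Type*} [CommRing k] [AddCommGroup V] [Module k V]

theorem exists_boundary_of_homotopy_rotaBaxter (m₁ : V →ₗ[k] V) (m₂ H : V →ₗ[k] V →ₗ[k] V)
    (T R₁ S₁ : V →ₗ[k] V) (ε : ℤ) {a b : V} (ha : m₁ a = 0) (hb : m₁ b = 0)
    (hT : m₂ (T a) (T b) - T (m₂ a (S₁ b)) - T (m₂ (R₁ a) b)
      = -(m₁ (H a b) + ε • H a (m₁ b) + H (m₁ a) b)) :
    ∃ w : V, m₂ (T a) (T b) - T (m₂ (R₁ a) b + m₂ a (S₁ b)) = m₁ w := by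
  refine ⟨-H a b, ?_⟩
  rw [ha, hb, map_zero, map_zero, LinearMap.zero_apply, smul_zero, add_zero, add_zero] at hT
  rw [map_neg, ← hT, map_add]
  abel

end HomotopyRotaBaxter

theorem stmt12_general (k V : Type*) [Field k] [AddCommGroup V] [Module k V]
    (𝒢 : ℤ → Submodule k V)
    (m₁ : V →ₗ[k] V) (m₂ : V →ₗ[k] V →ₗ[k] V)
    (R₁ S₁ : V →ₗ[k] V) (R₂ S₂ : V →ₗ[k] V →ₗ[k] V)
    (hR2 : ∀ p : ℤ, ∀ a ∈ 𝒢 p, ∀ b : V,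
      m₂ (R₁ a) (R₁ b) - R₁ (m₂ a (S₁ b)) - R₁ (m₂ (R₁ a) b)
        = -(m₁ (R₂ a b) + (((-1 : ℤˣ) ^ p : ℤˣ) : ℤ) • R₂ a (m₁ b) + R₂ (m₁ a) b))
    (hS2 : ∀ p : ℤ, ∀ a ∈ 𝒢 p, ∀ b : V,
      m₂ (S₁ a) (S₁ b) - S₁ (m₂ a (S₁ b)) - S₁ (m₂ (R₁ a) b)
        = -(m₁ (S₂ a b) + (((-1 : ℤˣ) ^ p : ℤˣ) : ℤ) • S₂ a (m₁ b) + S₂ (m₁ a) b)) :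
    ∀ p : ℤ, ∀ a ∈ 𝒢 p, ∀ b : V, m₁ a = 0 → m₁ b = 0 →
      (∃ w : V, m₂ (R₁ a) (R₁ b) - R₁ (m₂ (R₁ a) b + m₂ a (S₁ b)) = m₁ w) ∧
      (∃ w : V, m₂ (S₁ a) (S₁ b) - S₁ (m₂ (R₁ a) b + m₂ a (S₁ b)) = m₁ w) := by
  intro p a ha b hma hmb
  exact ⟨exists_boundary_of_homotopy_rotaBaxter m₁ m₂ R₂ R₁ R₁ S₁ _ hma hmb (hR2 p a ha b),
    exists_boundary_of_homotopy_rotaBaxter m₁ m₂ S₂ S₁ R₁ S₁ _ hma hmb (hS2 p a ha b)⟩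

/-- Let `(V, m₁)` be a chain complex graded by submodules `𝒢`, `m₂` a chain multiplication,
`R₁, S₁` degree-0 chain maps and `R₂, S₂` degree-1 homotopies satisfying the homotopy
Rota-Baxter identities.  Then the induced operators `[R₁], [S₁]` on homology `H(V, m₁)` form a
coupled Rota-Baxter operator: on cycles, both coupled Rota-Baxter identities hold up to a
boundary (i.e. they hold in homology). -/
theorem stmt12 (k V : Type*) [Field k] [AddCommGroup V] [Module k V]
    (𝒢 : ℤ → Submodule k V)
    (m₁ : V →ₗ[k] V) (m₂ : V →ₗ[k] V →ₗ[k] V)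
    (R₁ S₁ : V →ₗ[k] V) (R₂ S₂ : V →ₗ[k] V →ₗ[k] V)
    (hsq : ∀ x : V, m₁ (m₁ x) = 0)
    (hchain : ∀ p : ℤ, ∀ x ∈ 𝒢 p, ∀ y : V,
      m₁ (m₂ x y) = m₂ (m₁ x) y + (((-1 : ℤˣ) ^ p : ℤˣ) : ℤ) • m₂ x (m₁ y))
    (hR1 : ∀ x : V, m₁ (R₁ x) = R₁ (m₁ x))
    (hS1 : ∀ x : V, m₁ (S₁ x) = S₁ (m₁ x))
    (hR2 : ∀ p : ℤ, ∀ a ∈ 𝒢 p, ∀ b : V,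
      m₂ (R₁ a) (R₁ b) - R₁ (m₂ a (S₁ b)) - R₁ (m₂ (R₁ a) b)
        = -(m₁ (R₂ a b) + (((-1 : ℤˣ) ^ p : ℤˣ) : ℤ) • R₂ a (m₁ b) + R₂ (m₁ a) b))
    (hS2 : ∀ p : ℤ, ∀ a ∈ 𝒢 p, ∀ b : V,
      m₂ (S₁ a) (S₁ b) - S₁ (m₂ a (S₁ b)) - S₁ (m₂ (R₁ a) b)
        = -(m₁ (S₂ a b) + (((-1 : ℤˣ) ^ p : ℤˣ) : ℤ) • S₂ a (m₁ b) + S₂ (m₁ a) b)) :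
    ∀ p : ℤ, ∀ a ∈ 𝒢 p, ∀ b : V, m₁ a = 0 → m₁ b = 0 →
      (∃ w : V, m₂ (R₁ a) (R₁ b) - R₁ (m₂ (R₁ a) b + m₂ a (S₁ b)) = m₁ w) ∧
      (∃ w : V, m₂ (S₁ a) (S₁ b) - S₁ (m₂ (R₁ a) b + m₂ a (S₁ b)) = m₁ w) :=
  stmt12_general k V 𝒢 m₁ m₂ R₁ S₁ R₂ S₂ hR2 hS2
end
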